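/- arXiv:2211.06349 — 3 statements merged into one kernel-verified Lean document; each statement's English description precedes it below -/
import Mathlib

section
/- If the spectra of the partial traces ρ_A for A in a collection 𝒜 are compatible with a joint state ρ on H = (C^d)^⊗n, then for every k ∈ ℕ the symmetric extension σ = ρ^⊗k on H^⊗k satisfies: σ ⪰ 0, tr(σ) = 1, σ is invariant under the diagonal action of S_k permuting copies, and tr(η((α₁...α_ℓ)^A) σ) = Σᵢ (μ_A)ᵢ^ℓ for all ℓ-cycles with ℓ ≤ k and all A ∈ 𝒜. -/
open Matrix
open scoped ComplexOrder

variable {n d k : ℕ}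

/-- Partial trace of an `n`-qudit density matrix onto the subsystems in `A`. -/
noncomputable def ptrace (A : Finset (Fin n))
    (ρ : Matrix (Fin n → Fin d) (Fin n → Fin d) ℂ) :
    Matrix ({i // i ∈ A} → Fin d) ({i // i ∈ A} → Fin d) ℂ :=
  Matrix.of fun x y => ∑ z : {i // i ∉ A} → Fin d,
    ρ (fun i => if h : i ∈ A then x ⟨i, h⟩ else z ⟨i, h⟩)
      (fun i => if h : i ∈ A then y ⟨i, h⟩ else z ⟨i, h⟩)

/-- The `k`-fold tensor power `ρ^⊗k` of an `n`-partite state, acting on `k` copies. -/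
noncomputable def statePow (ρ : Matrix (Fin n → Fin d) (Fin n → Fin d) ℂ) (k : ℕ) :
    Matrix (Fin k → Fin n → Fin d) (Fin k → Fin n → Fin d) ℂ :=
  Matrix.of fun x y => ∏ c, ρ (x c) (y c)

/-- The operator `η(σ^A)` acting with the permutation `σ ∈ S_k` on the `k` copies of
the subsystems contained in `A`, and trivially on the remaining subsystems. -/
noncomputable def permOnSubsys (d : ℕ) (A : Finset (Fin n)) {k : ℕ} (σ : Equiv.Perm (Fin k)) :
    Matrix (Fin k → Fin n → Fin d) (Fin k → Fin n → Fin d) ℂ :=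
  Matrix.of fun x y =>
    if ∀ (c : Fin k) (i : Fin n), x c i = if i ∈ A then y (σ⁻¹ c) i else y c i then 1 else 0

/-- The diagonal action `τ(π)` of `π ∈ S_k` permuting the `k` copies of the `n`-partite system. -/
noncomputable def copyPerm (n d : ℕ) {k : ℕ} (π : Equiv.Perm (Fin k)) :
    Matrix (Fin k → Fin n → Fin d) (Fin k → Fin n → Fin d) ℂ :=
  Matrix.of fun x y => if x = y ∘ ⇑π⁻¹ then 1 else 0


/-!
In coordinates, `tr(η(σ^A) ρ^⊗k)` is a sum over the indices of all `k` copies. Summing out the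
indices of the subsystems outside `A` turns it into `∑ u, ∏ c, ρ_A (u c) (u (σ⁻¹ c))`, a contraction
of `k` copies of `ρ_A` along `σ⁻¹`. Summing out one index of a cycle multiplies the two adjacent
factors and shortens the cycle by one, so an `ℓ`-cycle contributes `tr(ρ_A^ℓ) = ∑ᵢ (μ_A)ᵢ^ℓ` and
every fixed point `tr ρ_A = 1`. Positivity, normalisation and invariance of `ρ^⊗k` are direct:
`ρ = Bᴴ B` gives `ρ^⊗k = (B^⊗k)ᴴ B^⊗k`, and permuting the copies only reorders a product.
-/

open Function Equiv Finset

section PermTrace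

variable {α I R : Type*} [Fintype α] [DecidableEq α] [Fintype I] [CommSemiring R]

theorem Fintype.sum_sum_update_eq {β : Type*} [AddCommMonoid β] (x : α) (G : (α → I) → I → β) :
    ∑ u, ∑ t, G (update u x t) (u x) = ∑ u, ∑ t, G u t := by
  simp only [← Fintype.sum_prod_type']
  exact Fintype.sum_equiv
    (Involutive.toPerm (fun p : (α → I) × I => (update p.1 x p.2, p.1 x)) fun p => by simp) _ _
    fun _ => rfl

/-- `tr(P_σ (f c₁ ⊗ ⋯ ⊗ f cₖ))`: the column index of the factor at `c` is the row index of the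
factor at `σ c`. -/
def permTrace (σ : Perm α) (f : α → Matrix I I R) : R :=
  ∑ u : α → I, ∏ c, f c (u c) (u (σ c))

theorem permTrace_one (f : α → Matrix I I R) : permTrace 1 f = ∏ c, (f c).trace := by
  simp only [permTrace, Perm.one_apply, Matrix.trace, Matrix.diag]
  exact (Fintype.prod_sum fun c j => f c j j).symm

theorem permTrace_mul_trace (σ : Perm α) (f : α → Matrix I I R) {x : α} (hx : σ x ≠ x)
    (X : Matrix I I R) :
    permTrace σ f * X.trace =
      permTrace (swap x (σ x) * σ) (update (update f (σ⁻¹ x) (f (σ⁻¹ x) * f x)) x X) := by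
  set a := σ⁻¹ x
  have hσa : σ a = x := by simp [a]
  have hax : a ≠ x := fun h => hx (by rw [← h, hσa, h])
  set f' := update (update f a (f a * f x)) x X
  set s : Finset α := {a, x}
  have hσs : ∀ c ∉ s, σ c ≠ x := fun c hc h => hc (by simp [s, ← σ.injective (h.trans hσa.symm)])
  have hcompl : ∀ c ∉ s, (swap x (σ x) * σ) c = σ c ∧ f' c = f c := by
    intro c hc
    simp only [s, Finset.mem_insert, Finset.mem_singleton, not_or] at hc
    refine ⟨swap_apply_of_ne_of_ne (hσs c (by simp [s, hc.1, hc.2])) ?_, by simp [f', hc.1, hc.2]⟩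
    exact fun h => hc.2 (σ.injective h)
  rw [permTrace, Matrix.trace, Finset.sum_mul_sum, ← Fintype.sum_sum_update_eq x, permTrace]
  refine Finset.sum_congr rfl fun u _ => ?_
  simp only [← Finset.prod_mul_prod_compl s, Matrix.diag_apply]
  have hrest : ∀ t, ∏ c ∈ sᶜ, f c (update u x t c) (update u x t (σ c)) =
      ∏ c ∈ sᶜ, f' c (u c) (u ((swap x (σ x) * σ) c)) := fun t =>
    Finset.prod_congr rfl fun c hc => by
      have hc' := Finset.mem_compl.1 hc
      rw [(hcompl c hc').1, (hcompl c hc').2, update_of_ne (hσs c hc'),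
        update_of_ne (fun h => hc' (by simp [s, h]))]
  simp only [hrest, s, Finset.prod_pair hax, update_self, update_of_ne hax, update_of_ne hx, hσa,
    f', Perm.mul_apply, swap_apply_left, swap_apply_right, Matrix.mul_apply, Finset.sum_mul]
  exact Finset.sum_congr rfl fun t _ => by ring

theorem permTrace_of_isEmpty [IsEmpty I] [Nonempty α] (σ : Perm α) (f : α → Matrix I I R) :
    permTrace σ f = 0 := by
  simp [permTrace]

theorem permTrace_swap [DecidableEq I] {a b : α} (hab : a ≠ b) (f : α → Matrix I I R) :
    permTrace (swap a b) f = (f b * f a).trace * ∏ c ∈ {a, b}ᶜ, (f c).trace := by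
  have : Nonempty α := ⟨a⟩
  cases isEmpty_or_nonempty I
  · simp [permTrace_of_isEmpty, Matrix.trace]
  obtain ⟨e⟩ := ‹Nonempty I›
  have hba : (swap a b)⁻¹ a = b := by simp
  -- The contracted index becomes a fixed point; giving it a trace-one factor keeps the value.
  rw [← mul_one (permTrace _ f), ← trace_single_eq_same e (1 : R),
    permTrace_mul_trace _ f (x := a) (by simpa using hab.symm), swap_apply_left,
    Equiv.swap_mul_self,
    permTrace_one, ← prod_mul_prod_compl {a, b}, prod_pair hab, hba]
  congr 1
  · simp [hab.symm]
  · exact prod_congr rfl fun c hc => by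
      simp only [mem_compl, mem_insert, mem_singleton, not_or] at hc
      simp [hc.1, hc.2]

theorem Equiv.Perm.IsCycle.permTrace_eq [DecidableEq I] {σ : Perm α} (hσ : σ.IsCycle)
    {c₀ : α} (hc₀ : c₀ ∈ σ.support) {f : α → Matrix I I R} {M : Matrix I I R}
    (hf : ∀ c ∈ σ.support, c ≠ c₀ → f c = M) :
    permTrace σ f = (M ^ (#σ.support - 1) * f c₀).trace * ∏ c ∈ σ.supportᶜ, (f c).trace := by
  have : Nonempty α := ⟨c₀⟩
  cases isEmpty_or_nonempty I
  · simp [permTrace_of_isEmpty, Matrix.trace]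
  obtain ⟨e⟩ := ‹Nonempty I›
  induction hm : #σ.support using Nat.strong_induction_on generalizing σ f c₀ with
  | _ m ih =>
  have hσc₀ : σ c₀ ≠ c₀ := Perm.mem_support.1 hc₀
  by_cases h2 : σ (σ c₀) = c₀
  · have hsupp : σ.support = {c₀, σ c₀} := by
      rw [hσ.eq_swap_of_apply_apply_eq_self hσc₀ h2, support_swap hσc₀.symm]
      simp
    rw [← hm, hsupp, card_pair hσc₀.symm, hσ.eq_swap_of_apply_apply_eq_self hσc₀ h2,
      permTrace_swap hσc₀.symm, swap_apply_left, hf _ (Perm.apply_mem_support.2 hc₀) hσc₀, pow_one]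
  set a := σ⁻¹ c₀ with ha_def
  have ha : a ∈ σ.support := by
    rw [← Perm.support_inv]; exact Perm.apply_mem_support.2 (by rwa [Perm.support_inv])
  have hσa : σ a = c₀ := by simp [a]
  have hac₀ : a ≠ c₀ := fun h => hσc₀ (by rwa [h] at hσa)
  have hsupp : (swap c₀ (σ c₀) * σ).support = σ.support.erase c₀ := by
    rw [Perm.support_swap_mul_eq σ c₀ h2, sdiff_singleton_eq_erase]
  have hcompl : (swap c₀ (σ c₀) * σ).supportᶜ = insert c₀ σ.supportᶜ := by
    ext c; by_cases hc : c = c₀ <;> simp [hsupp, hc, hc₀]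
  set f' := update (update f a (f a * f c₀)) c₀ (single e e 1)
  have hf'_compl : ∏ c ∈ σ.supportᶜ, (f' c).trace = ∏ c ∈ σ.supportᶜ, (f c).trace :=
    prod_congr rfl fun c hc => by
      have hc' : c ∉ σ.support := mem_compl.1 hc
      simp only [f', update_of_ne (ne_of_mem_of_not_mem hc₀ hc').symm,
        update_of_ne (ne_of_mem_of_not_mem ha hc').symm]
  have hm2 : 2 ≤ m := hm ▸ hσ.two_le_card_support
  rw [← mul_one (permTrace σ f), ← trace_single_eq_same e (1 : R), permTrace_mul_trace σ f hσc₀,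
    ← ha_def,
    ih (m - 1) (by omega) (hσ.swap_mul hσc₀ h2) (hsupp ▸ mem_erase.2 ⟨hac₀, ha⟩)
      (fun c hc hca => ?_) (by rw [hsupp, card_erase_of_mem hc₀, hm]),
    hcompl, prod_insert (by simp [hc₀]), hf'_compl]
  · simp only [update_of_ne hac₀, update_self, hf a ha hac₀, trace_single_eq_same, one_mul,
      ← mul_assoc, ← pow_succ, show m - 1 - 1 + 1 = m - 1 by omega]
  · rw [hsupp] at hc
    have hcc₀ := ne_of_mem_erase hc
    simp only [update_of_ne hcc₀, update_of_ne hca, hf c (mem_of_mem_erase hc) hcc₀]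

theorem Equiv.Perm.IsCycle.permTrace_const [DecidableEq I] {σ : Perm α} (hσ : σ.IsCycle)
    (M : Matrix I I R) :
    permTrace σ (fun _ => M) =
      (M ^ #σ.support).trace * M.trace ^ (Fintype.card α - #σ.support) := by
  obtain ⟨c₀, hc₀⟩ := hσ.nonempty_support
  rw [hσ.permTrace_eq hc₀ fun _ _ _ => rfl, prod_const, card_compl, ← pow_succ,
    Nat.sub_add_cancel (card_pos.2 ⟨c₀, hc₀⟩)]

end PermTrace

theorem Matrix.IsHermitian.trace_pow_eq_sum_eigenvalues_pow {m : Type*} [Fintype m]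
    [DecidableEq m] {M : Matrix m m ℂ} (hM : M.IsHermitian) (ℓ : ℕ) :
    (M ^ ℓ).trace = ∑ i, (hM.eigenvalues i : ℂ) ^ ℓ := by
  conv_lhs => rw [hM.spectral_theorem]
  rw [← map_pow, Unitary.conjStarAlgAut_apply, trace_mul_cycle,
    Unitary.coe_star_mul_self, one_mul, diagonal_pow, trace_diagonal]
  simp

open scoped MatrixOrder in
theorem statePow_posSemidef {ρ : Matrix (Fin n → Fin d) (Fin n → Fin d) ℂ} (hρ : ρ.PosSemidef)
    (k : ℕ) : (statePow ρ k).PosSemidef := by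
  obtain ⟨B, rfl⟩ := CStarAlgebra.nonneg_iff_eq_star_mul_self.1 hρ.nonneg
  have : statePow (star B * B) k = (statePow B k)ᴴ * statePow B k := by
    ext x y
    simp only [statePow, conjTranspose_apply, of_apply, Matrix.mul_apply, star_prod,
      ← prod_mul_distrib]
    exact Fintype.prod_sum fun c t => star (B t (x c)) * B t (y c)
  rw [this]
  exact posSemidef_conjTranspose_mul_self _

theorem trace_statePow (ρ : Matrix (Fin n → Fin d) (Fin n → Fin d) ℂ) (k : ℕ) :
    (statePow ρ k).trace = ρ.trace ^ k := by
  simp only [Matrix.trace, Matrix.diag, statePow, of_apply]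
  rw [← Fintype.prod_sum fun (_ : Fin k) t => ρ t t, prod_const, card_univ, Fintype.card_fin]

theorem copyPerm_eq_permMatrix (π : Perm (Fin k)) :
    copyPerm n d π = Perm.permMatrix ℂ (π.arrowCongr (Equiv.refl (Fin n → Fin d))).symm := by
  ext x y
  simp only [copyPerm, of_apply, PEquiv.toMatrix_apply, toPEquiv_apply, Option.mem_def,
    Option.some.injEq, symm_apply_eq]
  rfl

theorem statePow_submatrix_comp (ρ : Matrix (Fin n → Fin d) (Fin n → Fin d) ℂ)
    (π : Perm (Fin k)) : (statePow ρ k).submatrix (· ∘ π) (· ∘ π) = statePow ρ k := by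
  ext x y
  exact Equiv.prod_comp π fun c => ρ (x c) (y c)

theorem copyPerm_mul_statePow_mul_conjTranspose (ρ : Matrix (Fin n → Fin d) (Fin n → Fin d) ℂ)
    (π : Perm (Fin k)) :
    copyPerm n d π * statePow ρ k * (copyPerm n d π)ᴴ = statePow ρ k := by
  rw [copyPerm_eq_permMatrix, conjTranspose_permMatrix, PEquiv.toMatrix_toPEquiv_mul,
    PEquiv.mul_toMatrix_toPEquiv, submatrix_submatrix]
  exact statePow_submatrix_comp ρ π

theorem trace_ptrace (A : Finset (Fin n)) (ρ : Matrix (Fin n → Fin d) (Fin n → Fin d) ℂ) :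
    (ptrace A ρ).trace = ρ.trace := by
  simp only [Matrix.trace, Matrix.diag, ptrace, of_apply]
  rw [← (Equiv.piEquivPiSubtypeProd (· ∈ A) fun _ => Fin d).symm.sum_comp, Fintype.sum_prod_type]
  rfl

theorem trace_permOnSubsys_mul (A : Finset (Fin n)) (σ : Perm (Fin k))
    (S : Matrix (Fin k → Fin n → Fin d) (Fin k → Fin n → Fin d) ℂ) :
    (permOnSubsys d A σ * S).trace =
      ∑ y, S y (fun c i => if i ∈ A then y (σ⁻¹ c) i else y c i) := by
  simp only [Matrix.trace, Matrix.diag, Matrix.mul_apply, permOnSubsys, of_apply, ite_mul, one_mul,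
    zero_mul]
  rw [Finset.sum_comm]
  refine Finset.sum_congr rfl fun y _ => ?_
  simp only [← funext_iff, Finset.sum_ite_eq', Finset.mem_univ, if_true]

theorem trace_permOnSubsys_mul_statePow (A : Finset (Fin n)) (σ : Perm (Fin k))
    (ρ : Matrix (Fin n → Fin d) (Fin n → Fin d) ℂ) :
    (permOnSubsys d A σ * statePow ρ k).trace = permTrace σ⁻¹ fun _ => ptrace A ρ := by
  simp only [trace_permOnSubsys_mul, statePow, of_apply]
  set e := Equiv.piEquivPiSubtypeProd (· ∈ A) fun _ => Fin d
  set E : (Fin k → {i // i ∈ A} → Fin d) × (Fin k → {i // i ∉ A} → Fin d) ≃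
      (Fin k → Fin n → Fin d) :=
    (arrowProdEquivProdArrow _ _ _).symm.trans (piCongrRight fun _ => e.symm)
  have hE : ∀ u v c, (fun i => if i ∈ A then E (u, v) (σ⁻¹ c) i else E (u, v) c i) =
      e.symm (u (σ⁻¹ c), v c) := by
    intro u v c
    ext i
    by_cases hi : i ∈ A <;> simp [E, e, hi]
  rw [← E.sum_comp, Fintype.sum_prod_type, permTrace]
  refine Finset.sum_congr rfl fun u _ => ?_
  simp only [hE]
  exact (Fintype.prod_sum fun c z => ρ (e.symm (u c, z)) (e.symm (u (σ⁻¹ c), z))).symm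

/-- Symmetric extension relaxation (necessity): if the marginal spectra `μ_A`, `A ∈ 𝒜`,
come from a joint state `ρ` on `(ℂ^d)^⊗n`, then for every `k` the symmetric extension
`σ = ρ^⊗k` is positive semidefinite, has trace one, is invariant under the diagonal
`S_k`-action permuting copies, and satisfies
`tr(η((α₁...α_ℓ)^A) σ) = Σᵢ (μ_A)ᵢ^ℓ` for all `ℓ`-cycles with `ℓ ≤ k` and all `A ∈ 𝒜`. -/
theorem symmetric_extension_relaxation (n d k : ℕ) (𝒜 : Finset (Finset (Fin n)))
    (ρ : Matrix (Fin n → Fin d) (Fin n → Fin d) ℂ)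
    (hρ : ρ.PosSemidef) (htr : ρ.trace = 1)
    (μ : ∀ A : Finset (Fin n), ({i // i ∈ A} → Fin d) → ℝ)
    (hμ : ∀ A ∈ 𝒜, ∃ hH : (ptrace A ρ).IsHermitian, μ A = hH.eigenvalues) :
    (statePow ρ k).PosSemidef ∧ (statePow ρ k).trace = 1 ∧
      (∀ π : Equiv.Perm (Fin k),
        copyPerm n d π * statePow ρ k * (copyPerm n d π)ᴴ = statePow ρ k) ∧
      (∀ A ∈ 𝒜, ∀ (ℓ : ℕ) (σ : Equiv.Perm (Fin k)),
        σ.IsCycle → σ.support.card = ℓ → ℓ ≤ k →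
        (permOnSubsys d A σ * statePow ρ k).trace = ∑ x, ((μ A x : ℂ)) ^ ℓ) := by
  refine ⟨statePow_posSemidef hρ k, by rw [trace_statePow, htr, one_pow],
    copyPerm_mul_statePow_mul_conjTranspose ρ, fun A hA ℓ σ hσ hℓ _ => ?_⟩
  obtain ⟨hH, hμA⟩ := hμ A hA
  rw [trace_permOnSubsys_mul_statePow, hσ.inv.permTrace_const, Perm.support_inv, hℓ, trace_ptrace,
    htr, one_pow, mul_one, hH.trace_pow_eq_sum_eigenvalues_pow, hμA]
end

section
/- For any tripartite quantum state ρ_{ABC} on a tensor product of finite-dimensional Hilbert spaces, 1 + tr(ρ_{BC}²) − tr(ρ_{AB}²) − tr(ρ_{AC}²) ≥ 0. -/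
open Matrix
open scoped ComplexOrder

variable {a b c : ℕ}

/-- Two-body reduced state on `AB`. -/
noncomputable def rAB (ρ : Matrix (Fin a × Fin b × Fin c) (Fin a × Fin b × Fin c) ℂ) :
    Matrix (Fin a × Fin b) (Fin a × Fin b) ℂ :=
  Matrix.of fun x y => ∑ z : Fin c, ρ (x.1, x.2, z) (y.1, y.2, z)

/-- Two-body reduced state on `AC`. -/
noncomputable def rAC (ρ : Matrix (Fin a × Fin b × Fin c) (Fin a × Fin b × Fin c) ℂ) :
    Matrix (Fin a × Fin c) (Fin a × Fin c) ℂ :=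
  Matrix.of fun x y => ∑ z : Fin b, ρ (x.1, z, x.2) (y.1, z, y.2)

/-- Two-body reduced state on `BC`. -/
noncomputable def rBC (ρ : Matrix (Fin a × Fin b × Fin c) (Fin a × Fin b × Fin c) ℂ) :
    Matrix (Fin b × Fin c) (Fin b × Fin c) ℂ :=
  Matrix.of fun x y => ∑ z : Fin a, ρ (z, x.1, x.2) (z, y.1, y.2)

/-!
Let `P` and `Q` act on two copies of `ABC` by exchanging their `AB` parts, respectively their
`AC` parts. They are commuting Hermitian involutions, `PQ` exchanges the `BC` parts, and by the
swap trick `tr((ρ ⊗ ρ) P) = tr ρ_AB²`, and likewise for `Q` and `PQ`. So the quantity in question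
is `tr((ρ ⊗ ρ) T)` with `T = (1 - P)(1 - Q)`. Since `T* T = 4 T`, `T` is four times an orthogonal
projection, so its trace against the positive `ρ ⊗ ρ` is nonnegative.
-/

open Kronecker

theorem star_mul_self_one_sub_mul_one_sub {R : Type*} [Ring R] [StarRing R] {p q : R}
    (hp : IsSelfAdjoint p) (hq : IsSelfAdjoint q) (hpp : p * p = 1) (hqq : q * q = 1)
    (hpq : Commute p q) :
    star ((1 - p) * (1 - q)) * ((1 - p) * (1 - q)) = 4 * ((1 - p) * (1 - q)) := by
  have hp2 : (1 - p) * (1 - p) = 2 * (1 - p) := by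
    rw [sub_mul, mul_sub, mul_sub, hpp]; noncomm_ring
  have hq2 : (1 - q) * (1 - q) = 2 * (1 - q) := by
    rw [sub_mul, mul_sub, mul_sub, hqq]; noncomm_ring
  have hc : Commute (1 - p) (1 - q) :=
    (Commute.one_right _).sub_right ((Commute.one_left q).sub_left hpq)
  rw [star_mul, star_sub, star_sub, star_one, hp.star_eq, hq.star_eq, ← hc.eq,
    hc.symm.mul_mul_mul_comm, hp2, hq2]
  noncomm_ring

section PosSemidef

variable {𝕜 n : Type*} [RCLike 𝕜] [Fintype n]

theorem Matrix.PosSemidef.trace_mul_conjTranspose_mul_self_nonneg {R : Matrix n n 𝕜}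
    (hR : R.PosSemidef) (X : Matrix n n 𝕜) : 0 ≤ (R * (Xᴴ * X)).trace := by
  rw [← Matrix.mul_assoc, trace_mul_comm, ← Matrix.mul_assoc]
  exact (hR.mul_mul_conjTranspose_same X).trace_nonneg

theorem Matrix.PosSemidef.trace_mul_one_sub_mul_one_sub_nonneg [DecidableEq n]
    {R P Q : Matrix n n 𝕜} (hR : R.PosSemidef) (hP : P.IsHermitian) (hQ : Q.IsHermitian)
    (hPP : P * P = 1) (hQQ : Q * Q = 1) (hPQ : Commute P Q) :
    0 ≤ (R * ((1 - P) * (1 - Q))).trace := by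
  have h := hR.trace_mul_conjTranspose_mul_self_nonneg ((1 - P) * (1 - Q))
  rw [← star_eq_conjTranspose, star_mul_self_one_sub_mul_one_sub hP hQ hPP hQQ hPQ,
    ← Nat.ofNat_nsmul_eq_mul, mul_smul_comm, trace_smul, Nat.ofNat_nsmul_eq_mul] at h
  simpa using mul_nonneg (inv_nonneg.mpr (by norm_num : (0 : 𝕜) ≤ 4)) h

end PosSemidef

section PermMatrix

variable {n R : Type*} [DecidableEq n]

theorem Matrix.trace_mul_permMatrix [Fintype n] [NonAssocSemiring R] (M : Matrix n n R)
    (σ : Equiv.Perm n) : (M * σ.permMatrix R).trace = ∑ i, M i (σ.symm i) := by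
  rw [Equiv.Perm.permMatrix, PEquiv.mul_toMatrix_toPEquiv]
  rfl

theorem Matrix.isHermitian_permMatrix_of_involutive [NonAssocSemiring R] [StarRing R]
    {σ : Equiv.Perm n} (hσ : Function.Involutive σ) : (σ.permMatrix R).IsHermitian := by
  rw [IsHermitian, conjTranspose_permMatrix, Equiv.Perm.inv_def,
    Function.Involutive.symm_eq_self_of_involutive σ hσ]

theorem Matrix.permMatrix_mul_self_of_involutive [Fintype n] [NonAssocSemiring R]
    {σ : Equiv.Perm n} (hσ : Function.Involutive σ) : σ.permMatrix R * σ.permMatrix R = 1 := by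
  rw [← permMatrix_mul, show σ * σ = 1 from Equiv.ext hσ, permMatrix_one]

end PermMatrix

section Swaps

variable {α β γ : Type*}

/-- On `(ABC) × (ABC)`, the indices of `ρ ⊗ ρ`, exchange the `A` and `B` entries of the two
copies. -/
def swapAB : Equiv.Perm ((α × β × γ) × (α × β × γ)) :=
  Function.Involutive.toPerm (fun x => ((x.2.1, x.2.2.1, x.1.2.2), (x.1.1, x.1.2.1, x.2.2.2)))
    fun _ => rfl

def swapAC : Equiv.Perm ((α × β × γ) × (α × β × γ)) :=
  Function.Involutive.toPerm (fun x => ((x.2.1, x.1.2.1, x.2.2.2), (x.1.1, x.2.2.1, x.1.2.2)))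
    fun _ => rfl

def swapBC : Equiv.Perm ((α × β × γ) × (α × β × γ)) :=
  Function.Involutive.toPerm (fun x => ((x.1.1, x.2.2.1, x.2.2.2), (x.2.1, x.1.2.1, x.1.2.2)))
    fun _ => rfl

theorem swapAB_involutive :
    Function.Involutive (swapAB : Equiv.Perm ((α × β × γ) × (α × β × γ))) :=
  fun _ => rfl

theorem swapAC_involutive :
    Function.Involutive (swapAC : Equiv.Perm ((α × β × γ) × (α × β × γ))) :=
  fun _ => rfl

variable (R : Type*) [NonAssocSemiring R] [Fintype α] [Fintype β] [Fintype γ]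
  [DecidableEq α] [DecidableEq β] [DecidableEq γ]

theorem permMatrix_swapAB_mul_permMatrix_swapAC :
    swapAB.permMatrix R * swapAC.permMatrix R =
      (swapBC : Equiv.Perm ((α × β × γ) × (α × β × γ))).permMatrix R := by
  rw [← permMatrix_mul]
  rfl

theorem commute_permMatrix_swapAB_permMatrix_swapAC :
    Commute (swapAB.permMatrix R : Matrix ((α × β × γ) × (α × β × γ)) _ R)
      (swapAC.permMatrix R) := by
  rw [Commute, SemiconjBy, ← permMatrix_mul, ← permMatrix_mul]
  rfl

end Swaps

section ReducedPurity

variable (ρ : Matrix (Fin a × Fin b × Fin c) (Fin a × Fin b × Fin c) ℂ)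

theorem trace_kronecker_mul_permMatrix_swapAB :
    ((ρ ⊗ₖ ρ) * swapAB.permMatrix ℂ).trace = (rAB ρ ^ 2).trace := by
  let e : (Fin a × Fin b) × (Fin a × Fin b) × Fin c × Fin c ≃
      (Fin a × Fin b × Fin c) × (Fin a × Fin b × Fin c) :=
    ⟨fun y => ((y.1.1, y.1.2, y.2.2.1), (y.2.1.1, y.2.1.2, y.2.2.2)),
     fun x => ((x.1.1, x.1.2.1), (x.2.1, x.2.2.1), (x.1.2.2, x.2.2.2)), fun _ => rfl, fun _ => rfl⟩
  rw [trace_mul_permMatrix, ← e.sum_comp, pow_two]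
  simp only [trace, diag, mul_apply, rAB, of_apply, Fintype.sum_prod_type, kroneckerMap_apply,
    Finset.sum_mul_sum]
  rfl

theorem trace_kronecker_mul_permMatrix_swapAC :
    ((ρ ⊗ₖ ρ) * swapAC.permMatrix ℂ).trace = (rAC ρ ^ 2).trace := by
  let e : (Fin a × Fin c) × (Fin a × Fin c) × Fin b × Fin b ≃
      (Fin a × Fin b × Fin c) × (Fin a × Fin b × Fin c) :=
    ⟨fun y => ((y.1.1, y.2.2.1, y.1.2), (y.2.1.1, y.2.2.2, y.2.1.2)),
     fun x => ((x.1.1, x.1.2.2), (x.2.1, x.2.2.2), (x.1.2.1, x.2.2.1)), fun _ => rfl, fun _ => rfl⟩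
  rw [trace_mul_permMatrix, ← e.sum_comp, pow_two]
  simp only [trace, diag, mul_apply, rAC, of_apply, Fintype.sum_prod_type, kroneckerMap_apply,
    Finset.sum_mul_sum]
  rfl

theorem trace_kronecker_mul_permMatrix_swapBC :
    ((ρ ⊗ₖ ρ) * swapBC.permMatrix ℂ).trace = (rBC ρ ^ 2).trace := by
  let e : (Fin b × Fin c) × (Fin b × Fin c) × Fin a × Fin a ≃
      (Fin a × Fin b × Fin c) × (Fin a × Fin b × Fin c) :=
    ⟨fun y => ((y.2.2.1, y.1.1, y.1.2), (y.2.2.2, y.2.1.1, y.2.1.2)),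
     fun x => ((x.1.2.1, x.1.2.2), (x.2.2.1, x.2.2.2), (x.1.1, x.2.1)), fun _ => rfl, fun _ => rfl⟩
  rw [trace_mul_permMatrix, ← e.sum_comp, pow_two]
  simp only [trace, diag, mul_apply, rBC, of_apply, Fintype.sum_prod_type, kroneckerMap_apply,
    Finset.sum_mul_sum]
  rfl

end ReducedPurity

/-- For any tripartite quantum state `ρ_{ABC}` on a tensor product of finite-dimensional
Hilbert spaces, `1 + tr(ρ_{BC}²) − tr(ρ_{AB}²) − tr(ρ_{AC}²) ≥ 0`. -/
theorem purity_inequality (a b c : ℕ)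
    (ρ : Matrix (Fin a × Fin b × Fin c) (Fin a × Fin b × Fin c) ℂ)
    (hρ : ρ.PosSemidef) (htr : ρ.trace = 1) :
    0 ≤ 1 + (rBC ρ ^ 2).trace - (rAB ρ ^ 2).trace - (rAC ρ ^ 2).trace := by
  have key := (hρ.kronecker hρ).trace_mul_one_sub_mul_one_sub_nonneg
    (isHermitian_permMatrix_of_involutive swapAB_involutive)
    (isHermitian_permMatrix_of_involutive swapAC_involutive)
    (permMatrix_mul_self_of_involutive swapAB_involutive)
    (permMatrix_mul_self_of_involutive swapAC_involutive)
    (commute_permMatrix_swapAB_permMatrix_swapAC ℂ)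
  simp only [sub_mul, mul_sub, one_mul, mul_one, permMatrix_swapAB_mul_permMatrix_swapAC,
    trace_sub, trace_kronecker, htr,
    trace_kronecker_mul_permMatrix_swapAB, trace_kronecker_mul_permMatrix_swapAC,
    trace_kronecker_mul_permMatrix_swapBC] at key
  convert key using 1
  ring
end

section
/- The two-copy purity inequality 1 + tr(ρ_{BC}²) − tr(ρ_{AB}²) − tr(ρ_{AC}²) ≥ 0 is equivalent to the positivity of the witness operator W = A⊗P⊗P + P⊗A⊗A ⪰ 0 evaluated on ρ^⊗2, where P and A are the projectors onto the symmetric and antisymmetric subspaces of (C^d)^⊗2 of each party's two copies. -/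
open Matrix Kronecker
open scoped ComplexOrder

variable {a b c : ℕ}

/-- Swap of party `A` between the two copies. -/
noncomputable def swapA (a b c : ℕ) :
    Matrix ((Fin a × Fin b × Fin c) × (Fin a × Fin b × Fin c))
           ((Fin a × Fin b × Fin c) × (Fin a × Fin b × Fin c)) ℂ :=
  Matrix.of fun p q =>
    if p.1 = (q.2.1, q.1.2) ∧ p.2 = (q.1.1, q.2.2) then 1 else 0

/-- Swap of party `B` between the two copies. -/
noncomputable def swapB (a b c : ℕ) :
    Matrix ((Fin a × Fin b × Fin c) × (Fin a × Fin b × Fin c))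
           ((Fin a × Fin b × Fin c) × (Fin a × Fin b × Fin c)) ℂ :=
  Matrix.of fun p q =>
    if p.1 = (q.1.1, q.2.2.1, q.1.2.2) ∧ p.2 = (q.2.1, q.1.2.1, q.2.2.2) then 1 else 0

/-- Swap of party `C` between the two copies. -/
noncomputable def swapC (a b c : ℕ) :
    Matrix ((Fin a × Fin b × Fin c) × (Fin a × Fin b × Fin c))
           ((Fin a × Fin b × Fin c) × (Fin a × Fin b × Fin c)) ℂ :=
  Matrix.of fun p q =>
    if p.1 = (q.1.1, q.1.2.1, q.2.2.2) ∧ p.2 = (q.2.1, q.2.2.1, q.1.2.2) then 1 else 0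

/-- Symmetric projector built from a swap `F`: `P = (1 + F)/2`. -/
noncomputable def symP {ι : Type*} [Fintype ι] [DecidableEq ι] (F : Matrix ι ι ℂ) :
    Matrix ι ι ℂ := (1 / 2 : ℂ) • (1 + F)

/-- Antisymmetric projector built from a swap `F`: `A = (1 − F)/2`. -/
noncomputable def antiP {ι : Type*} [Fintype ι] [DecidableEq ι] (F : Matrix ι ι ℂ) :
    Matrix ι ι ℂ := (1 / 2 : ℂ) • (1 - F)

/-- The witness `W = A⊗P⊗P + P⊗A⊗A`, where `P`, `A` are the symmetric and antisymmetric
projectors of the two copies of parties `A`, `B`, `C` respectively. -/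
noncomputable def witnessW (a b c : ℕ) :
    Matrix ((Fin a × Fin b × Fin c) × (Fin a × Fin b × Fin c))
           ((Fin a × Fin b × Fin c) × (Fin a × Fin b × Fin c)) ℂ :=
  antiP (swapA a b c) * symP (swapB a b c) * symP (swapC a b c) +
    symP (swapA a b c) * antiP (swapB a b c) * antiP (swapC a b c)

/-! ### Auxiliary machinery -/

section pm
variable {ι : Type*} [Fintype ι] [DecidableEq ι]

/-- Matrix of the map `f` acting on basis indices (transposed permutation-style matrix). -/
noncomputable def pmMat (f : ι → ι) : Matrix ι ι ℂ :=
  Matrix.of fun p q => if p = f q then 1 else 0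

lemma pmMat_mul (f g : ι → ι) : pmMat f * pmMat g = pmMat fun q => f (g q) := by
  ext p q
  simp [pmMat, Matrix.mul_apply, ite_mul, mul_ite]

omit [Fintype ι] in
lemma pmMat_id : pmMat (id : ι → ι) = 1 := by
  ext p q
  simp [pmMat, Matrix.one_apply]

omit [Fintype ι] in
lemma pmMat_conjTranspose (f : ι → ι) (hf : Function.Involutive f) :
    (pmMat f)ᴴ = pmMat f := by
  ext p q
  simp only [pmMat, conjTranspose_apply, Matrix.of_apply]
  have h : (q = f p) ↔ (p = f q) := by
    constructor <;> (rintro rfl; exact (hf _).symm)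
  simp only [h]
  split <;> simp

lemma pmMat_trace_mul (f : ι → ι) (X : Matrix ι ι ℂ) :
    (pmMat f * X).trace = ∑ r, X r (f r) := by
  simp only [Matrix.trace, Matrix.diag, Matrix.mul_apply, pmMat, Matrix.of_apply, ite_mul,
    one_mul, zero_mul]
  rw [Finset.sum_comm]
  simp

end pm

/-- The doubled index type. -/
abbrev TT (a b c : ℕ) := (Fin a × Fin b × Fin c) × (Fin a × Fin b × Fin c)

def fA : TT a b c → TT a b c := fun q => ((q.2.1, q.1.2), (q.1.1, q.2.2))
def fB : TT a b c → TT a b c := fun q =>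
  ((q.1.1, q.2.2.1, q.1.2.2), (q.2.1, q.1.2.1, q.2.2.2))
def fC : TT a b c → TT a b c := fun q =>
  ((q.1.1, q.1.2.1, q.2.2.2), (q.2.1, q.2.2.1, q.1.2.2))

lemma swapA_eq : swapA a b c = pmMat fA := by
  ext p q; simp [swapA, pmMat, fA, Prod.ext_iff]
lemma swapB_eq : swapB a b c = pmMat fB := by
  ext p q; simp [swapB, pmMat, fB, Prod.ext_iff]
lemma swapC_eq : swapC a b c = pmMat fC := by
  ext p q; simp [swapC, pmMat, fC, Prod.ext_iff]

def gBC : TT a b c → TT a b c := fun q => ((q.1.1, q.2.2), (q.2.1, q.1.2))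
def gAB : TT a b c → TT a b c := fun q =>
  ((q.2.1, q.2.2.1, q.1.2.2), (q.1.1, q.1.2.1, q.2.2.2))
def gAC : TT a b c → TT a b c := fun q =>
  ((q.2.1, q.1.2.1, q.2.2.2), (q.1.1, q.2.2.1, q.1.2.2))

lemma witness_expand {ι : Type*} [Fintype ι] [DecidableEq ι] (FA FB FC G1 G2 G3 : Matrix ι ι ℂ)
    (h1 : FB * FC = G1) (h2 : FA * FB = G2) (h3 : FA * FC = G3) :
    ((1/2:ℂ) • (1 - FA)) * ((1/2:ℂ) • (1 + FB)) * ((1/2:ℂ) • (1 + FC)) +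
      ((1/2:ℂ) • (1 + FA)) * ((1/2:ℂ) • (1 - FB)) * ((1/2:ℂ) • (1 - FC)) =
    (1/4 : ℂ) • (1 + G1 - G2 - G3) := by
  subst h1 h2 h3
  simp only [smul_mul_assoc, mul_smul_comm, smul_smul]
  rw [← smul_add]
  have expand : (1 - FA) * (1 + FB) * (1 + FC) + (1 + FA) * (1 - FB) * (1 - FC)
      = (2:ℂ) • (1 + FB * FC - FA * FB - FA * FC) := by
    noncomm_ring
    module
  rw [expand, smul_smul]
  norm_num

lemma witness_proj {ι : Type*} [Fintype ι] [DecidableEq ι] (G1 G2 G3 : Matrix ι ι ℂ)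
    (h11 : G1 * G1 = 1) (h12 : G1 * G2 = G3) (h21 : G2 * G1 = G3)
    (h13 : G1 * G3 = G2) (h31 : G3 * G1 = G2)
    (h23 : G2 * G3 = G1) (h32 : G3 * G2 = G1)
    (h22 : G2 * G2 = 1) (h33 : G3 * G3 = 1) :
    ((1/4:ℂ) • (1 + G1 - G2 - G3)) * ((1/4:ℂ) • (1 + G1 - G2 - G3)) =
      (1/4:ℂ) • (1 + G1 - G2 - G3) := by
  simp only [smul_mul_assoc, mul_smul_comm, smul_smul]
  have expand : (1 + G1 - G2 - G3) * (1 + G1 - G2 - G3) = (4:ℂ) • (1 + G1 - G2 - G3) := by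
    noncomm_ring
    simp only [h11, h22, h33, h12, h21, h13, h31, h23, h32]
    module
  rw [expand, smul_smul]
  norm_num

lemma sixBC {A B C M : Type*} [Fintype A] [Fintype B] [Fintype C] [AddCommMonoid M]
    (f : A → B → C → A → B → C → M) :
    ∑ a1, ∑ b1, ∑ c1, ∑ a2, ∑ b2, ∑ c2, f a1 b1 c1 a2 b2 c2 =
    ∑ b1, ∑ c1, ∑ b2, ∑ c2, ∑ a1, ∑ a2, f a1 b1 c1 a2 b2 c2 := by
  trans ∑ x : A × B × C × A × B × C, f x.1 x.2.1 x.2.2.1 x.2.2.2.1 x.2.2.2.2.1 x.2.2.2.2.2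
  · simp [Fintype.sum_prod_type]
  trans ∑ y : B × C × B × C × A × A, f y.2.2.2.2.1 y.1 y.2.1 y.2.2.2.2.2 y.2.2.1 y.2.2.2.1
  · exact Fintype.sum_equiv
      ⟨fun x => (x.2.1, x.2.2.1, x.2.2.2.2.1, x.2.2.2.2.2, x.1, x.2.2.2.1),
       fun y => (y.2.2.2.2.1, y.1, y.2.1, y.2.2.2.2.2, y.2.2.1, y.2.2.2.1),
       fun x => rfl, fun y => rfl⟩ _ _ (fun x => rfl)
  · simp [Fintype.sum_prod_type]

lemma sixAB {A B C M : Type*} [Fintype A] [Fintype B] [Fintype C] [AddCommMonoid M]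
    (f : A → B → C → A → B → C → M) :
    ∑ a1, ∑ b1, ∑ c1, ∑ a2, ∑ b2, ∑ c2, f a1 b1 c1 a2 b2 c2 =
    ∑ a1, ∑ b1, ∑ a2, ∑ b2, ∑ c1, ∑ c2, f a1 b1 c1 a2 b2 c2 := by
  trans ∑ x : A × B × C × A × B × C, f x.1 x.2.1 x.2.2.1 x.2.2.2.1 x.2.2.2.2.1 x.2.2.2.2.2
  · simp [Fintype.sum_prod_type]
  trans ∑ y : A × B × A × B × C × C, f y.1 y.2.1 y.2.2.2.2.1 y.2.2.1 y.2.2.2.1 y.2.2.2.2.2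
  · exact Fintype.sum_equiv
      ⟨fun x => (x.1, x.2.1, x.2.2.2.1, x.2.2.2.2.1, x.2.2.1, x.2.2.2.2.2),
       fun y => (y.1, y.2.1, y.2.2.2.2.1, y.2.2.1, y.2.2.2.1, y.2.2.2.2.2),
       fun x => rfl, fun y => rfl⟩ _ _ (fun x => rfl)
  · simp [Fintype.sum_prod_type]

lemma sixAC {A B C M : Type*} [Fintype A] [Fintype B] [Fintype C] [AddCommMonoid M]
    (f : A → B → C → A → B → C → M) :
    ∑ a1, ∑ b1, ∑ c1, ∑ a2, ∑ b2, ∑ c2, f a1 b1 c1 a2 b2 c2 =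
    ∑ a1, ∑ c1, ∑ a2, ∑ c2, ∑ b1, ∑ b2, f a1 b1 c1 a2 b2 c2 := by
  trans ∑ x : A × B × C × A × B × C, f x.1 x.2.1 x.2.2.1 x.2.2.2.1 x.2.2.2.2.1 x.2.2.2.2.2
  · simp [Fintype.sum_prod_type]
  trans ∑ y : A × C × A × C × B × B, f y.1 y.2.2.2.2.1 y.2.1 y.2.2.1 y.2.2.2.2.2 y.2.2.2.1
  · exact Fintype.sum_equiv
      ⟨fun x => (x.1, x.2.2.1, x.2.2.2.1, x.2.2.2.2.2, x.2.1, x.2.2.2.2.1),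
       fun y => (y.1, y.2.2.2.2.1, y.2.1, y.2.2.1, y.2.2.2.2.2, y.2.2.2.1),
       fun x => rfl, fun y => rfl⟩ _ _ (fun x => rfl)
  · simp [Fintype.sum_prod_type]

lemma traceBC (ρ : Matrix (Fin a × Fin b × Fin c) (Fin a × Fin b × Fin c) ℂ) :
    (pmMat (gBC : TT a b c → TT a b c) * (ρ ⊗ₖ ρ)).trace = (rBC ρ ^ 2).trace := by
  rw [pmMat_trace_mul]
  simp only [pow_two, Matrix.trace, Matrix.diag, Matrix.mul_apply, rBC, Matrix.of_apply,
    kroneckerMap_apply, gBC, Finset.sum_mul_sum, Fintype.sum_prod_type]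
  exact sixBC fun a1 b1 c1 a2 b2 c2 =>
    ρ (a1, b1, c1) (a1, b2, c2) * ρ (a2, b2, c2) (a2, b1, c1)

lemma traceAB (ρ : Matrix (Fin a × Fin b × Fin c) (Fin a × Fin b × Fin c) ℂ) :
    (pmMat (gAB : TT a b c → TT a b c) * (ρ ⊗ₖ ρ)).trace = (rAB ρ ^ 2).trace := by
  rw [pmMat_trace_mul]
  simp only [pow_two, Matrix.trace, Matrix.diag, Matrix.mul_apply, rAB, Matrix.of_apply,
    kroneckerMap_apply, gAB, Finset.sum_mul_sum, Fintype.sum_prod_type]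
  exact sixAB fun a1 b1 c1 a2 b2 c2 =>
    ρ (a1, b1, c1) (a2, b2, c1) * ρ (a2, b2, c2) (a1, b1, c2)

lemma traceAC (ρ : Matrix (Fin a × Fin b × Fin c) (Fin a × Fin b × Fin c) ℂ) :
    (pmMat (gAC : TT a b c → TT a b c) * (ρ ⊗ₖ ρ)).trace = (rAC ρ ^ 2).trace := by
  rw [pmMat_trace_mul]
  simp only [pow_two, Matrix.trace, Matrix.diag, Matrix.mul_apply, rAC, Matrix.of_apply,
    kroneckerMap_apply, gAC, Finset.sum_mul_sum, Fintype.sum_prod_type]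
  exact sixAC fun a1 b1 c1 a2 b2 c2 =>
    ρ (a1, b1, c1) (a2, b1, c2) * ρ (a2, b2, c2) (a1, b2, c1)

lemma witnessW_eq (a b c : ℕ) :
    witnessW a b c = (1/4 : ℂ) • (1 + pmMat (gBC : TT a b c → TT a b c)
      - pmMat (gAB : TT a b c → TT a b c) - pmMat (gAC : TT a b c → TT a b c)) := by
  rw [witnessW, symP, symP, antiP, antiP, swapA_eq, swapB_eq, swapC_eq]
  exact witness_expand _ _ _ _ _ _ (pmMat_mul fB fC) (pmMat_mul fA fB) (pmMat_mul fA fC)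

/-- The two-copy purity inequality `1 + tr(ρ_{BC}²) − tr(ρ_{AB}²) − tr(ρ_{AC}²) ≥ 0`
is equivalent to the non-negativity of the positive semidefinite witness
`W = A⊗P⊗P + P⊗A⊗A` evaluated on `ρ^⊗2`; indeed
`tr(W ρ^⊗2) = ¼ (1 + tr(ρ_{BC}²) − tr(ρ_{AB}²) − tr(ρ_{AC}²))`. -/
theorem witness_iff_purity (a b c : ℕ)
    (ρ : Matrix (Fin a × Fin b × Fin c) (Fin a × Fin b × Fin c) ℂ)
    (hρ : ρ.PosSemidef) (htr : ρ.trace = 1) :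
    (witnessW a b c).PosSemidef ∧
    (witnessW a b c * (ρ ⊗ₖ ρ)).trace =
      (1 / 4 : ℂ) * (1 + (rBC ρ ^ 2).trace - (rAB ρ ^ 2).trace - (rAC ρ ^ 2).trace) ∧
    (0 ≤ 1 + (rBC ρ ^ 2).trace - (rAB ρ ^ 2).trace - (rAC ρ ^ 2).trace ↔
      0 ≤ (witnessW a b c * (ρ ⊗ₖ ρ)).trace) := by
  have hW := witnessW_eq a b c
  -- projection property
  have hProj : witnessW a b c * witnessW a b c = witnessW a b c := by
    rw [hW]
    exact witness_proj _ _ _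
      ((pmMat_mul gBC gBC).trans pmMat_id)
      (pmMat_mul gBC gAB) (pmMat_mul gAB gBC)
      (pmMat_mul gBC gAC) (pmMat_mul gAC gBC)
      (pmMat_mul gAB gAC) (pmMat_mul gAC gAB)
      ((pmMat_mul gAB gAB).trans pmMat_id)
      ((pmMat_mul gAC gAC).trans pmMat_id)
  -- hermitian
  have hHerm : (witnessW a b c)ᴴ = witnessW a b c := by
    rw [hW]
    simp only [conjTranspose_smul, conjTranspose_sub, conjTranspose_add, conjTranspose_one,
      pmMat_conjTranspose gBC (fun q => rfl), pmMat_conjTranspose gAB (fun q => rfl),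
      pmMat_conjTranspose gAC (fun q => rfl)]
    norm_num
  have hPSD : (witnessW a b c).PosSemidef := by
    have h : witnessW a b c = (witnessW a b c)ᴴ * witnessW a b c := by
      rw [hHerm, hProj]
    rw [h]
    exact posSemidef_conjTranspose_mul_self _
  -- trace formula
  have hTrace : (witnessW a b c * (ρ ⊗ₖ ρ)).trace =
      (1 / 4 : ℂ) * (1 + (rBC ρ ^ 2).trace - (rAB ρ ^ 2).trace - (rAC ρ ^ 2).trace) := by
    rw [hW, smul_mul_assoc, trace_smul, Matrix.sub_mul, Matrix.sub_mul, Matrix.add_mul,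
      Matrix.one_mul, trace_sub, trace_sub, trace_add, traceBC, traceAB, traceAC,
      trace_kronecker, htr, mul_one, smul_eq_mul]
  refine ⟨hPSD, hTrace, ?_⟩
  rw [hTrace]
  constructor
  · intro h
    exact mul_nonneg (by norm_num [Complex.le_def]) h
  · intro h
    have h4 : (4:ℂ) * ((1/4 : ℂ) *
        (1 + (rBC ρ ^ 2).trace - (rAB ρ ^ 2).trace - (rAC ρ ^ 2).trace)) =
        1 + (rBC ρ ^ 2).trace - (rAB ρ ^ 2).trace - (rAC ρ ^ 2).trace := by ring
    rw [← h4]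
    exact mul_nonneg (by norm_num [Complex.le_def]) h
end
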